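/- Let F be a probability distribution on [0,∞) with mean μ ∈ (0,∞) and let F_T be a probability distribution on [0,∞). Let Z be a random variable with the length-biased distribution F_Z induced by F, let T ∼ F_T, X ∼ F, with X, T, Z independent. Then the distributional equation Z =ᵈ X + T·Z holds (i.e., the distribution of X + T·Z equals F_Z) if and only if F̂(s) = exp(−σ(s)) for all s ≥ 0, where σ(s) = ∫₀^∞ (1 − F̂(ts))/t dF_T(t) with the integrand at t = 0 defined by continuity to equal μs. -/

import Mathlib

open MeasureTheory

/-- Laplace–Stieltjes transform of a (nonnegative) probability distribution. -/
noncomputable def LS (F : Measure ℝ) (s : ℝ) : ℝ := ∫ x, Real.exp (-(s * x)) ∂F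

/-- `σ(s) = ∫₀^∞ (1 − F̂(ts))/t dF_T(t)`, with the integrand at `t = 0` equal to `μ s`. -/
noncomputable def sigmaT (F FT : Measure ℝ) (μ : ℝ) (s : ℝ) : ℝ :=
  ∫ t, (if t = 0 then μ * s else (1 - LS F (t * s)) / t) ∂FT

/-- The length-biased distribution induced by `F` with mean `μ`:
`F_Z([0,z]) = (1/μ) ∫₀^z x dF(x)`, i.e. `F` weighted by the density `x/μ`. -/
noncomputable def lengthBiased (F : Measure ℝ) (μ : ℝ) : Measure ℝ :=
  F.withDensity (fun x => ENNReal.ofReal (x / μ))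

open Set

/-! Write `φ = LS F`, `g = LS F_Z` and `h` for the Laplace transform of the law of `T·Z`.
Since `x dF(x) = μ dF_Z(x)`, one has `φ' = -μ g`, and the same computation under the integral
defining `σ` gives `σ' = μ h` (both are proved in integrated form, by Fubini). The Laplace transform
of `X + T·Z` is `φ h`, and Laplace transforms determine finite measures on `[0, ∞)` (after the
substitution `y = e^{-x}` they are the moments of a measure on `[0, 1]`, and polynomials are dense
there). So the distributional equation says `g = φ h`, i.e. `(φ e^σ)' = 0`, i.e. `φ = e^{-σ}`,
because `φ 0 = 1` and `σ 0 = 0`. -/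

section Calculus

theorem forall_eq_mul_iff_forall_eq_exp_neg {φ σ g h : ℝ → ℝ} {c : ℝ} (hc : c ≠ 0)
    (hφ₀ : φ 0 = 1) (hσ₀ : σ 0 = 0)
    (hφ : ∀ b, 0 ≤ b → HasDerivWithinAt φ (-(c * g b)) (Ici 0) b)
    (hσ : ∀ b, 0 ≤ b → HasDerivWithinAt σ (c * h b) (Ici 0) b) :
    (∀ s, 0 ≤ s → g s = φ s * h s) ↔ ∀ s, 0 ≤ s → φ s = Real.exp (-σ s) := by
  constructor
  · intro hgh s hs
    have hE : ∀ b, 0 ≤ b → HasDerivWithinAt (fun x => φ x * Real.exp (σ x)) 0 (Ici 0) b := by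
      intro b hb
      refine ((hφ b hb).mul (hσ b hb).exp).congr_deriv ?_
      rw [hgh b hb]
      ring
    have hconst := constant_of_has_deriv_right_zero
      (fun x hx => (hE x hx.1).continuousWithinAt.mono Icc_subset_Ici_self)
      (fun x hx => (hE x hx.1).mono (Ici_subset_Ici.2 hx.1)) s ⟨hs, le_rfl⟩
    rw [hφ₀, hσ₀, Real.exp_zero, mul_one] at hconst
    rw [Real.exp_neg]
    exact eq_inv_of_mul_eq_one_left hconst
  · intro hφσ b hb
    have hφ' : HasDerivWithinAt φ (Real.exp (-σ b) * -(c * h b)) (Ici 0) b :=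
      (hσ b hb).neg.exp.congr_of_mem (fun x hx => hφσ x hx) hb
    have hderiv := (uniqueDiffOn_Ici 0 b hb).eq_deriv _ (hφ b hb) hφ'
    rw [← hφσ b hb] at hderiv
    exact mul_left_cancel₀ hc (by linear_combination -hderiv)

theorem hasDerivWithinAt_integral_Ici {f : ℝ → ℝ} {a b : ℝ} (hm : StronglyMeasurable f)
    (hf : ContinuousOn f (Ici a)) (hb : a ≤ b) :
    HasDerivWithinAt (fun s => ∫ u in a..s, f u) (f b) (Ici a) b := by
  have hint : IntervalIntegrable f volume a b :=
    (hf.mono Icc_subset_Ici_self).intervalIntegrable_of_Icc hb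
  rcases hb.eq_or_lt with rfl | hab
  · exact intervalIntegral.integral_hasDerivWithinAt_right hint hm.stronglyMeasurableAtFilter
      ((hf a self_mem_Ici).mono Ioi_subset_Ici_self)
  · exact (intervalIntegral.integral_hasDerivAt_right hint hm.stronglyMeasurableAtFilter
      (hf.continuousAt (Ici_mem_nhds hab))).hasDerivWithinAt

end Calculus

section Moments

variable {ν ν₁ ν₂ : Measure ℝ} {a b : ℝ}

theorem ContinuousOn.integrable_of_ae_mem_Icc [IsFiniteMeasure ν] {f : ℝ → ℝ}
    (hf : ContinuousOn f (Icc a b)) (hν : ∀ᵐ x ∂ν, x ∈ Icc a b) : Integrable f ν := by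
  simpa only [IntegrableOn, Measure.restrict_eq_self_of_ae_mem hν] using
    hf.integrableOn_compact (μ := ν) isCompact_Icc

theorem dist_integral_le_of_forall_mem_Icc [IsFiniteMeasure ν] {f g : ℝ → ℝ} {ε : ℝ}
    (hf : ContinuousOn f (Icc a b)) (hg : ContinuousOn g (Icc a b))
    (hν : ∀ᵐ x ∂ν, x ∈ Icc a b) (hfg : ∀ x ∈ Icc a b, |f x - g x| ≤ ε) :
    dist (∫ x, f x ∂ν) (∫ x, g x ∂ν) ≤ ε * ν.real univ := by
  rw [dist_eq_norm,
    ← integral_sub (hf.integrable_of_ae_mem_Icc hν) (hg.integrable_of_ae_mem_Icc hν)]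
  exact norm_integral_le_of_norm_le_const (hν.mono hfg)

theorem integral_eval_eq_of_integral_pow_eq (h₁ : ∀ᵐ x ∂ν₁, x ∈ Icc a b)
    (h₂ : ∀ᵐ x ∂ν₂, x ∈ Icc a b) [IsFiniteMeasure ν₁] [IsFiniteMeasure ν₂]
    (h : ∀ n : ℕ, ∫ x, x ^ n ∂ν₁ = ∫ x, x ^ n ∂ν₂) (p : Polynomial ℝ) :
    ∫ x, p.eval x ∂ν₁ = ∫ x, p.eval x ∂ν₂ := by
  simp only [Polynomial.eval_eq_sum_range]
  rw [integral_finsetSum _ fun i _ => (by fun_prop : Continuous fun x : ℝ => p.coeff i * x ^ i)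
      |>.continuousOn.integrable_of_ae_mem_Icc h₁,
    integral_finsetSum _ fun i _ => (by fun_prop : Continuous fun x : ℝ => p.coeff i * x ^ i)
      |>.continuousOn.integrable_of_ae_mem_Icc h₂]
  simp only [integral_const_mul, h]

theorem ext_of_integral_pow_eq [IsFiniteMeasure ν₁] [IsFiniteMeasure ν₂]
    (h₁ : ∀ᵐ x ∂ν₁, x ∈ Icc a b) (h₂ : ∀ᵐ x ∂ν₂, x ∈ Icc a b)
    (h : ∀ n : ℕ, ∫ x, x ^ n ∂ν₁ = ∫ x, x ^ n ∂ν₂) : ν₁ = ν₂ := by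
  refine ext_of_forall_integral_eq_of_IsFiniteMeasure fun f => eq_of_forall_dist_le fun ε hε => ?_
  set m := ν₁.real univ + ν₂.real univ + 1
  have hm : 0 < m := by positivity
  obtain ⟨p, hp⟩ := exists_polynomial_near_of_continuousOn a b f f.continuous.continuousOn
    (ε / m) (by positivity)
  have hfp : ∀ x ∈ Icc a b, |f x - p.eval x| ≤ ε / m := fun x hx =>
    (abs_sub_comm _ _).trans_le (hp x hx).le
  have hpf : ∀ x ∈ Icc a b, |p.eval x - f x| ≤ ε / m := fun x hx => (hp x hx).le
  calc dist (∫ x, f x ∂ν₁) (∫ x, f x ∂ν₂)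
      ≤ dist (∫ x, f x ∂ν₁) (∫ x, p.eval x ∂ν₁) + dist (∫ x, p.eval x ∂ν₂) (∫ x, f x ∂ν₂) := by
        rw [integral_eval_eq_of_integral_pow_eq h₁ h₂ h p]
        exact dist_triangle _ _ _
    _ ≤ ε / m * ν₁.real univ + ε / m * ν₂.real univ :=
        add_le_add
          (dist_integral_le_of_forall_mem_Icc f.continuous.continuousOn
            p.continuous.continuousOn h₁ hfp)
          (dist_integral_le_of_forall_mem_Icc p.continuous.continuousOn
            f.continuous.continuousOn h₂ hpf)
    _ ≤ ε := by
        rw [← mul_add, div_mul_eq_mul_div, div_le_iff₀ hm]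
        nlinarith

end Moments

theorem mul_integral_exp_neg_mul (x s : ℝ) :
    x * ∫ u in (0 : ℝ)..s, Real.exp (-(u * x)) = 1 - Real.exp (-(s * x)) := by
  rcases eq_or_ne x 0 with rfl | hx
  · simp
  · have hlin : ∀ u, -(u * x) = -x * u := fun u => by ring
    simp_rw [hlin]
    rw [intervalIntegral.integral_comp_mul_left (fun u => Real.exp u) (neg_ne_zero.2 hx),
      integral_exp, mul_zero, Real.exp_zero, smul_eq_mul]
    field_simp
    ring

section Laplace

variable {P : Measure ℝ}

theorem ae_nonneg_of_measure_Iio_eq_zero (hP : P (Iio 0) = 0) : ∀ᵐ x ∂P, 0 ≤ x := by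
  simp only [ae_iff, not_le]
  exact hP

theorem ae_nonneg_map {α : Type*} [MeasurableSpace α] {Q : Measure α} {f : α → ℝ}
    (hf : Measurable f) (h : ∀ᵐ a ∂Q, 0 ≤ f a) : ∀ᵐ y ∂Q.map f, 0 ≤ y :=
  (ae_map_iff hf.aemeasurable measurableSet_Ici).2 h

theorem ae_mul_nonneg_prod {Q : Measure ℝ} [SFinite P] [SFinite Q] (hP : ∀ᵐ x ∂P, 0 ≤ x)
    (hQ : ∀ᵐ x ∂Q, 0 ≤ x) : ∀ᵐ q ∂P.prod Q, 0 ≤ q.1 * q.2 := by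
  filter_upwards [Measure.quasiMeasurePreserving_fst.ae hP,
    Measure.quasiMeasurePreserving_snd.ae hQ] with q hx hy
  exact mul_nonneg hx hy

theorem norm_exp_neg_mul_le_one {a b : ℝ} (ha : 0 ≤ a) (hb : 0 ≤ b) :
    ‖Real.exp (-(a * b))‖ ≤ 1 := by
  rw [Real.norm_of_nonneg (Real.exp_pos _).le, Real.exp_le_one_iff, neg_nonpos]
  exact mul_nonneg ha hb

theorem stronglyMeasurable_LS [SFinite P] : StronglyMeasurable (LS P) :=
  StronglyMeasurable.integral_prod_right' (f := fun q : ℝ × ℝ => Real.exp (-(q.1 * q.2)))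
    (by fun_prop)

theorem LS_zero [IsProbabilityMeasure P] : LS P 0 = 1 := by simp [LS]

theorem LS_map_add_prod {α : Type*} [MeasurableSpace α] (P : Measure ℝ) (Q : Measure α)
    [SFinite P] [SFinite Q] {f : α → ℝ} (hf : Measurable f) (s : ℝ) :
    LS ((P.prod Q).map fun p => p.1 + f p.2) s = LS P s * LS (Q.map f) s := by
  simp only [LS]
  rw [integral_map (by fun_prop) (by fun_prop), integral_map hf.aemeasurable (by fun_prop),
    ← integral_prod_mul]
  congr with p
  rw [← Real.exp_add]
  ring_nf

variable [IsFiniteMeasure P]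

theorem integrable_exp_neg_mul (hP : ∀ᵐ x ∂P, 0 ≤ x) {s : ℝ} (hs : 0 ≤ s) :
    Integrable (fun x => Real.exp (-(s * x))) P :=
  Integrable.of_bound (by fun_prop) 1 (hP.mono fun _ hx => norm_exp_neg_mul_le_one hs hx)

theorem continuousOn_LS (hP : ∀ᵐ x ∂P, 0 ≤ x) : ContinuousOn (LS P) (Ici 0) :=
  continuousOn_of_dominated (fun _ _ => by fun_prop)
    (fun _ hs => hP.mono fun _ hx => norm_exp_neg_mul_le_one hs hx) (integrable_const 1)
    (ae_of_all _ fun _ => by fun_prop)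

theorem norm_LS_le_one [IsProbabilityMeasure P] (hP : ∀ᵐ x ∂P, 0 ≤ x) {s : ℝ} (hs : 0 ≤ s) :
    ‖LS P s‖ ≤ 1 := by
  simpa [LS] using
    norm_integral_le_of_norm_le_const (hP.mono fun _ hx => norm_exp_neg_mul_le_one hs hx)

theorem ext_of_LS_eq {P' : Measure ℝ} [IsFiniteMeasure P'] (hP : ∀ᵐ x ∂P, 0 ≤ x)
    (hP' : ∀ᵐ x ∂P', 0 ≤ x) (h : ∀ s, 0 ≤ s → LS P s = LS P' s) : P = P' := by
  have he : MeasurableEmbedding fun x : ℝ => Real.exp (-x) :=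
    (by fun_prop : Measurable fun x : ℝ => Real.exp (-x)).measurableEmbedding
      (Real.exp_injective.comp neg_injective)
  have hIcc : ∀ {Q : Measure ℝ}, (∀ᵐ x ∂Q, 0 ≤ x) →
      ∀ᵐ y ∂Q.map fun x => Real.exp (-x), y ∈ Icc 0 1 := fun hQ =>
    (ae_map_iff he.measurable.aemeasurable measurableSet_Icc).2 <|
      hQ.mono fun x hx => ⟨(Real.exp_pos _).le, Real.exp_le_one_iff.2 (neg_nonpos.2 hx)⟩
  refine he.map_injective (ext_of_integral_pow_eq (hIcc hP) (hIcc hP') fun n => ?_)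
  rw [integral_map he.measurable.aemeasurable (by fun_prop),
    integral_map he.measurable.aemeasurable (by fun_prop)]
  simpa only [LS, ← Real.exp_nat_mul, mul_neg] using h n n.cast_nonneg

theorem integral_LS_eq_integral_integral (hP : ∀ᵐ x ∂P, 0 ≤ x) {s : ℝ} (hs : 0 ≤ s) :
    ∫ u in (0 : ℝ)..s, LS P u = ∫ x, (∫ u in (0 : ℝ)..s, Real.exp (-(u * x))) ∂P := by
  simp only [intervalIntegral.integral_of_le hs, LS]
  refine integral_integral_swap (Integrable.of_bound (by fun_prop) 1 ?_)
  filter_upwards [Measure.quasiMeasurePreserving_fst.ae (ae_restrict_mem measurableSet_Ioc),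
    Measure.quasiMeasurePreserving_snd.ae hP] with q hu hx
  exact norm_exp_neg_mul_le_one hu.1.le hx

theorem LS_map_mul_prod {Q : Measure ℝ} [IsFiniteMeasure Q] (hP : ∀ᵐ x ∂P, 0 ≤ x)
    (hQ : ∀ᵐ x ∂Q, 0 ≤ x) {s : ℝ} (hs : 0 ≤ s) :
    LS ((P.prod Q).map fun q => q.1 * q.2) s = ∫ t, LS Q (t * s) ∂P := by
  simp only [LS]
  rw [integral_map (by fun_prop) (by fun_prop),
    integral_prod (fun q : ℝ × ℝ => Real.exp (-(s * (q.1 * q.2))))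
      (Integrable.of_bound (by fun_prop) 1 ?_)]
  · congr with t
    congr with z
    ring_nf
  · filter_upwards [Measure.quasiMeasurePreserving_fst.ae hP,
      Measure.quasiMeasurePreserving_snd.ae hQ] with q ht hz
    exact norm_exp_neg_mul_le_one hs (mul_nonneg ht hz)

end Laplace

section LengthBiased

variable {F : Measure ℝ} {μ : ℝ}

theorem ae_nonneg_lengthBiased (hF : ∀ᵐ x ∂F, 0 ≤ x) : ∀ᵐ z ∂lengthBiased F μ, 0 ≤ z :=
  (withDensity_absolutelyContinuous F _).ae_le hF

theorem integral_lengthBiased (hF : ∀ᵐ x ∂F, 0 ≤ x) (hμ : 0 ≤ μ) (G : ℝ → ℝ) :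
    ∫ z, G z ∂lengthBiased F μ = ∫ x, x / μ * G x ∂F := by
  rw [lengthBiased, integral_withDensity_eq_integral_toReal_smul (by fun_prop)
    (ae_of_all _ fun _ => ENNReal.ofReal_lt_top)]
  refine integral_congr_ae (hF.mono fun x hx => ?_)
  simp only [ENNReal.toReal_ofReal (div_nonneg hx hμ), smul_eq_mul]

theorem isProbabilityMeasure_lengthBiased (hF : ∀ᵐ x ∂F, 0 ≤ x) (hμ : 0 < μ)
    (hint : Integrable (fun x => x) F) (hmean : ∫ x, x ∂F = μ) :
    IsProbabilityMeasure (lengthBiased F μ) := by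
  constructor
  rw [lengthBiased, withDensity_apply _ MeasurableSet.univ, Measure.restrict_univ,
    ← ofReal_integral_eq_lintegral_ofReal (hint.div_const μ)
      (hF.mono fun x hx => div_nonneg hx hμ.le),
    integral_div, hmean, div_self hμ.ne', ENNReal.ofReal_one]

variable [IsProbabilityMeasure F]

theorem LS_eq_one_sub_mul_integral_LS_lengthBiased [IsFiniteMeasure (lengthBiased F μ)]
    (hF : ∀ᵐ x ∂F, 0 ≤ x) (hμ : 0 < μ) {s : ℝ} (hs : 0 ≤ s) :
    LS F s = 1 - μ * ∫ u in (0 : ℝ)..s, LS (lengthBiased F μ) u := by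
  rw [integral_LS_eq_integral_integral (ae_nonneg_lengthBiased hF) hs,
    integral_lengthBiased hF hμ.le]
  simp_rw [div_mul_eq_mul_div, mul_integral_exp_neg_mul]
  rw [integral_div, mul_div_cancel₀ _ hμ.ne',
    integral_sub (integrable_const 1) (integrable_exp_neg_mul hF hs)]
  simp [LS]

theorem hasDerivWithinAt_LS [IsFiniteMeasure (lengthBiased F μ)]
    (hF : ∀ᵐ x ∂F, 0 ≤ x) (hμ : 0 < μ) {b : ℝ} (hb : 0 ≤ b) :
    HasDerivWithinAt (LS F) (-(μ * LS (lengthBiased F μ) b)) (Ici 0) b :=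
  (((hasDerivWithinAt_integral_Ici stronglyMeasurable_LS
    (continuousOn_LS (ae_nonneg_lengthBiased hF)) hb).const_mul μ).const_sub 1).congr_of_mem
    (fun _ hs => LS_eq_one_sub_mul_integral_LS_lengthBiased hF hμ hs) hb

theorem mul_integral_LS_lengthBiased_mul [IsProbabilityMeasure (lengthBiased F μ)]
    (hF : ∀ᵐ x ∂F, 0 ≤ x) (hμ : 0 < μ) {t s : ℝ} (ht : 0 ≤ t) (hs : 0 ≤ s) :
    μ * ∫ u in (0 : ℝ)..s, LS (lengthBiased F μ) (t * u) =
      if t = 0 then μ * s else (1 - LS F (t * s)) / t := by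
  rcases ht.eq_or_lt with rfl | ht
  · simp [LS_zero]
  · rw [if_neg ht.ne', intervalIntegral.integral_comp_mul_left _ ht.ne', mul_zero, smul_eq_mul,
      LS_eq_one_sub_mul_integral_LS_lengthBiased hF hμ (mul_nonneg ht.le hs)]
    field_simp
    ring

theorem sigmaT_zero (FT : Measure ℝ) : sigmaT F FT μ 0 = 0 := by
  simp [sigmaT, LS_zero]

variable {FT : Measure ℝ} [IsProbabilityMeasure FT] [IsProbabilityMeasure (lengthBiased F μ)]

theorem sigmaT_eq_mul_integral_LS (hF : ∀ᵐ x ∂F, 0 ≤ x) (hT : ∀ᵐ t ∂FT, 0 ≤ t) (hμ : 0 < μ)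
    {s : ℝ} (hs : 0 ≤ s) :
    sigmaT F FT μ s =
      μ * ∫ u in (0 : ℝ)..s, LS ((FT.prod (lengthBiased F μ)).map fun q => q.1 * q.2) u := by
  have hZ := ae_nonneg_lengthBiased (μ := μ) hF
  rw [intervalIntegral.integral_congr fun u hu =>
      LS_map_mul_prod hT hZ (by rw [uIcc_of_le hs] at hu; exact hu.1),
    intervalIntegral.integral_of_le hs, integral_integral_swap, ← integral_const_mul]
  · refine integral_congr_ae (hT.mono fun t ht => ?_)
    dsimp only
    rw [← intervalIntegral.integral_of_le hs, mul_integral_LS_lengthBiased_mul hF hμ ht hs]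
  · refine Integrable.of_bound
      (stronglyMeasurable_LS.comp_measurable (by fun_prop)).aestronglyMeasurable 1 ?_
    filter_upwards [Measure.quasiMeasurePreserving_fst.ae (ae_restrict_mem measurableSet_Ioc),
      Measure.quasiMeasurePreserving_snd.ae hT] with q hu ht
    exact norm_LS_le_one hZ (mul_nonneg ht hu.1.le)

theorem hasDerivWithinAt_sigmaT (hF : ∀ᵐ x ∂F, 0 ≤ x) (hT : ∀ᵐ t ∂FT, 0 ≤ t) (hμ : 0 < μ)
    {b : ℝ} (hb : 0 ≤ b) :
    HasDerivWithinAt (sigmaT F FT μ)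
      (μ * LS ((FT.prod (lengthBiased F μ)).map fun q => q.1 * q.2) b) (Ici 0) b :=
  ((hasDerivWithinAt_integral_Ici stronglyMeasurable_LS
    (continuousOn_LS (ae_nonneg_map (by fun_prop)
      (ae_mul_nonneg_prod hT (ae_nonneg_lengthBiased hF)))) hb).const_mul μ).congr_of_mem
    (fun _ hs => sigmaT_eq_mul_integral_LS hF hT hμ hs) hb

end LengthBiased

/-- Example 2: for `X ∼ F`, `T ∼ F_T`, `Z ∼ F_Z` (length-biased, induced by `F`)
independent, the distributional equation `Z =ᵈ X + T·Z` holds (the pushforward of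
`F ⊗ F_T ⊗ F_Z` under `(x,t,z) ↦ x + t·z` equals `F_Z`) iff `F̂(s) = exp(−σ(s))`
for all `s ≥ 0`. -/
theorem stmt18 (F FT : Measure ℝ) [IsProbabilityMeasure F] [IsProbabilityMeasure FT]
    (hF : F (Set.Iio 0) = 0) (hT : FT (Set.Iio 0) = 0)
    (μ : ℝ) (hμ : 0 < μ) (hint : Integrable (fun x => x) F) (hmean : (∫ x, x ∂F) = μ) :
    Measure.map (fun p : ℝ × ℝ × ℝ => p.1 + p.2.1 * p.2.2)
        (F.prod (FT.prod (lengthBiased F μ))) = lengthBiased F μ ↔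
      ∀ s : ℝ, 0 ≤ s → LS F s = Real.exp (-(sigmaT F FT μ s)) := by
  replace hF := ae_nonneg_of_measure_Iio_eq_zero hF
  replace hT := ae_nonneg_of_measure_Iio_eq_zero hT
  have := isProbabilityMeasure_lengthBiased hF hμ hint hmean
  have hZ := ae_nonneg_lengthBiased (μ := μ) hF
  have hlaw := LS_map_add_prod F (FT.prod (lengthBiased F μ)) (f := fun q => q.1 * q.2)
    (by fun_prop)
  rw [← forall_eq_mul_iff_forall_eq_exp_neg hμ.ne' LS_zero (sigmaT_zero FT)
    (fun b hb => hasDerivWithinAt_LS hF hμ hb) (fun b hb => hasDerivWithinAt_sigmaT hF hT hμ hb)]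
  refine ⟨fun h s _ => by rw [← hlaw, h], fun h => ext_of_LS_eq ?_ hZ fun s hs => ?_⟩
  · refine ae_nonneg_map (by fun_prop) ?_
    filter_upwards [Measure.quasiMeasurePreserving_fst.ae hF,
      Measure.quasiMeasurePreserving_snd.ae (ae_mul_nonneg_prod hT hZ)] with p hx htz
    exact add_nonneg hx htz
  · rw [hlaw, h s hs]
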